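/- Let M be a strictly totally ordered monoid with at least two elements (a monoid with a total order such that g < g' implies gh < g'h and hg < hg' for all g, g', h ∈ M) and let R be an M-central Armendariz ring. Then R is a Baer ring if and only if the monoid ring R[M] is a Baer ring. -/

import Mathlib

/-!
An `M`-central Armendariz ring is abelian (its idempotents are central), and an abelian Baer ring
is reduced. Over a strictly totally ordered monoid a reduced ring is Armendariz: if `α * β = 0`
then all products of coefficients vanish, which is seen by peeling off the least term of `α`.
So the right annihilator of `W ⊆ R[M]` is that of the set of all coefficients of `W`, extended to
`R[M]`, and it is generated by the same idempotent. Conversely, `R` is a retract of `R[M]`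
through the augmentation, and retracts of Baer rings are Baer.
-/

open MonoidAlgebra

def IsBaerRing (S : Type*) [Semiring S] : Prop :=
  ∀ W : Set S, ∃ e : S, IsIdempotentElem e ∧ ∀ x : S, (∀ w ∈ W, w * x = 0) ↔ ∃ r : S, x = e * r

def IsArmendariz (R M : Type*) [Semiring R] [Mul M] : Prop :=
  ∀ α β : MonoidAlgebra R M, α * β = 0 → ∀ g h : M, α.coeff g * β.coeff h = 0

def IsCentralArmendariz (R M : Type*) [Semiring R] [Mul M] : Prop :=
  ∀ α β : MonoidAlgebra R M, α * β = 0 →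
    ∀ g ∈ α.coeff.support, ∀ h ∈ β.coeff.support, α.coeff g * β.coeff h ∈ Set.center R

namespace IsReduced

variable {R : Type*} [MonoidWithZero R] [IsReduced R] {a b : R}

theorem eq_zero_of_mul_self_eq_zero (h : a * a = 0) : a = 0 :=
  eq_zero_of_pow_eq_zero (n := 2) (by rwa [sq])

theorem mul_eq_zero_symm (h : a * b = 0) : b * a = 0 :=
  eq_zero_of_mul_self_eq_zero (by rw [mul_assoc, ← mul_assoc a, h, zero_mul, mul_zero])

theorem mul_eq_zero_of_mul_mul_eq_zero (h : a * b * a = 0) : a * b = 0 :=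
  mul_eq_zero_symm <| eq_zero_of_mul_self_eq_zero <| by rw [mul_assoc, ← mul_assoc a, h, mul_zero]

end IsReduced

section StrictOrderedMonoid

variable {M : Type*} [Monoid M] [LinearOrder M] [MulLeftStrictMono M] [MulRightStrictMono M]

theorem UniqueMul.of_forall_le {A B : Finset M} {a b : M} (hA : ∀ g ∈ A, a ≤ g)
    (hB : ∀ h ∈ B, b ≤ h) : UniqueMul A B a b := by
  intro g h hg hh hgh
  have hab : a * b ≤ a * h := mul_right_strictMono.monotone (hB h hh)
  have hah : a * h ≤ g * h := mul_left_strictMono.monotone (hA g hg)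
  exact ⟨(mul_left_strictMono : StrictMono (· * h)).injective (by order),
    (mul_right_strictMono : StrictMono (a * ·)).injective (by order)⟩

end StrictOrderedMonoid

namespace MonoidAlgebra

theorem single_mul_eq_zero {R M : Type*} [Semiring R] [Monoid M] {a : M} {c : R} {β : R[M]}
    (hc : ∀ h, c * β.coeff h = 0) : single a c * β = 0 := by
  have hβ : single 1 c * β = 0 := by
    ext h
    rw [coeff_single_one_mul, hc, coeff_zero, Finsupp.zero_apply]
  rw [← mul_one a, ← one_mul c, ← single_mul_single, mul_assoc, hβ, mul_zero]

variable {R M : Type*} [Semiring R] [IsReduced R] [Monoid M] [LinearOrder M]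
  [MulLeftStrictMono M] [MulRightStrictMono M]

/-- Take the least `b` with `α a * β b ≠ 0`. Right multiplication by `α a` kills all coefficients
of `β` below `b`, so `(a, b)` is a unique product for `α` and `β * α a`, whence
`α a * β b * α a = 0`. -/
theorem coeff_mul_coeff_eq_zero_of_forall_le {α β : R[M]} (hαβ : α * β = 0) {a : M}
    (ha : ∀ g ∈ α.coeff.support, a ≤ g) (h : M) : α.coeff a * β.coeff h = 0 := by
  classical
  set S := β.coeff.support.filter (fun h => α.coeff a * β.coeff h ≠ 0)
  by_contra hne
  have hS : S.Nonempty := ⟨h, by simp [S, hne, right_ne_zero_of_mul hne]⟩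
  set b := S.min' hS
  have hbS : b ∈ S := S.min'_mem hS
  have hlow : ∀ h < b, β.coeff h * α.coeff a = 0 := fun h hh =>
    IsReduced.mul_eq_zero_symm <| by
      by_contra hne'
      exact (S.min'_le h (by simp [S, hne', right_ne_zero_of_mul hne'])).not_gt hh
  set β' := β * single 1 (α.coeff a)
  have hβ' : ∀ h, β'.coeff h = β.coeff h * α.coeff a := fun h => coeff_mul_single_one _ _ _
  have huniq : UniqueMul α.coeff.support β'.coeff.support a b :=
    UniqueMul.of_forall_le ha fun h hh => not_lt.mp fun hlt => by
      simp [hβ', hlow h hlt] at hh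
  have hzero : α.coeff a * β.coeff b * α.coeff a = 0 := by
    rw [mul_assoc, ← hβ', ← coeff_mul_mul_of_uniqueMul huniq, ← mul_assoc, hαβ, zero_mul,
      coeff_zero, Finsupp.zero_apply]
  exact (Finset.mem_filter.mp hbS).2 (IsReduced.mul_eq_zero_of_mul_mul_eq_zero hzero)

theorem _root_.IsReduced.isArmendariz : IsArmendariz R M := by
  intro α β hαβ
  obtain ⟨f, rfl⟩ : ∃ f, α = ofCoeff f := ⟨α.coeff, rfl⟩
  induction f using Finsupp.induction_on_min with
  | zero => simp
  | single_add a c f hf _ ih =>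
    have hmin : ∀ g ∈ (Finsupp.single a c + f).support, a ≤ g := fun g hg => by
      rcases Finset.mem_union.mp (Finsupp.support_add hg) with hg | hg
      · exact (Finset.mem_singleton.mp (Finsupp.support_single_subset hg)).ge
      · exact (hf g hg).le
    have hfa : f a = 0 := Finsupp.notMem_support_iff.mp fun ha => lt_irrefl a (hf a ha)
    have hc : ∀ h, c * β.coeff h = 0 := fun h => by
      simpa [hfa] using coeff_mul_coeff_eq_zero_of_forall_le hαβ hmin h
    have hfβ : ofCoeff f * β = 0 := by
      rwa [ofCoeff_add, ofCoeff_single, add_mul, single_mul_eq_zero hc, zero_add] at hαβ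
    intro g h
    rw [coeff_ofCoeff, Finsupp.add_apply, add_mul, Finsupp.single_apply]
    split_ifs
    · simp [hc, ih hfβ g h]
    · simp [ih hfβ g h]

end MonoidAlgebra

namespace IsCentralArmendariz

variable {R M : Type*} [Ring R] [Monoid M] [Nontrivial M]

/-- With `a = e r (1 - e)` and `g ≠ 1`, the product `(e + a g) ((1 - e) - a g)` vanishes, so the
coefficient product `e * (-a) = -a` is central; but `a e = 0` while `e a = a`. -/
theorem mul_mul_one_sub_eq_zero (hR : IsCentralArmendariz R M) {e : R} (he : IsIdempotentElem e)
    (r : R) : e * r * (1 - e) = 0 := by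
  set a := e * r * (1 - e)
  have hea : e * a = a := by simp only [a, ← mul_assoc, he.eq]
  have hae : a * e = 0 := by simp only [a, mul_assoc, he.one_sub_mul_self, mul_zero]
  have haa : a * a = 0 := by
    have h : a * (e * a) = 0 := by rw [← mul_assoc, hae, zero_mul]
    rwa [hea] at h
  by_contra ha
  obtain ⟨g, hg⟩ := exists_ne (1 : M)
  have hmul : (single 1 e + single g a) * (single 1 (1 - e) + single g (-a)) = 0 := by
    simp only [add_mul, mul_add, single_mul_single, one_mul, mul_one, he.mul_one_sub_self,
      mul_neg, hea, haa, mul_sub, hae, sub_zero, single_zero, neg_zero]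
    rw [zero_add, add_zero, single_neg, add_neg_cancel]
  have he0 : e ≠ 0 := by rintro rfl; simp [a] at ha
  have hcoeff₁ : (single 1 e + single g a : R[M]).coeff 1 = e := by
    simp [coeff_add, hg.symm]
  have hcoeff₂ : (single 1 (1 - e) + single g (-a) : R[M]).coeff g = -a := by
    simp [coeff_add, hg]
  have hcentral := hR _ _ hmul 1 (by rw [Finsupp.mem_support_iff, hcoeff₁]; exact he0) g
    (by rw [Finsupp.mem_support_iff, hcoeff₂]; exact neg_ne_zero.mpr ha)
  rw [hcoeff₁, hcoeff₂, mul_neg, hea, Semigroup.mem_center_iff] at hcentral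
  have hcomm := hcentral e
  rw [mul_neg, hea, neg_mul, hae, neg_zero, neg_eq_zero] at hcomm
  exact ha hcomm

theorem mem_center_of_isIdempotentElem (hR : IsCentralArmendariz R M) {e : R}
    (he : IsIdempotentElem e) : e ∈ Set.center R := by
  refine Semigroup.mem_center_iff.mpr fun r => ?_
  have h₁ := hR.mul_mul_one_sub_eq_zero he r
  have h₂ := hR.mul_mul_one_sub_eq_zero he.one_sub r
  rw [sub_sub_cancel] at h₂
  rw [mul_sub, mul_one, sub_eq_zero] at h₁
  rw [sub_mul, one_mul, sub_mul, sub_eq_zero] at h₂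
  rw [h₁, h₂]

end IsCentralArmendariz

namespace IsBaerRing

variable {R S : Type*} [Semiring R] [Semiring S]

theorem isReduced (hS : IsBaerRing S) (hcentral : ∀ e : S, IsIdempotentElem e → e ∈ Set.center S) :
    IsReduced S := by
  refine (isReduced_iff_pow_one_lt 2 one_lt_two).mpr fun x hx => ?_
  obtain ⟨e, he, hann⟩ := hS {x}
  obtain ⟨r, rfl⟩ := (hann x).mp (by simpa [sq] using hx)
  have hxe : e * r * e = 0 := (hann e).mpr ⟨e, he.eq.symm⟩ _ rfl
  rw [← he.eq, mul_assoc, ← Semigroup.mem_center_iff.mp (hcentral e he) r, ← mul_assoc, hxe]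

theorem of_retract (f : R →+* S) (g : S →+* R) (hgf : Function.LeftInverse g f)
    (hS : IsBaerRing S) : IsBaerRing R := by
  intro W
  obtain ⟨E, hE, hann⟩ := hS (f '' W)
  refine ⟨g E, hE.map g, fun x => ⟨fun hx => ?_, ?_⟩⟩
  · obtain ⟨s, hs⟩ := (hann (f x)).mp (by rintro _ ⟨w, hw, rfl⟩; rw [← map_mul, hx w hw, map_zero])
    exact ⟨g s, by rw [← map_mul, ← hs, hgf]⟩
  · rintro ⟨r, rfl⟩ w hw
    have hwE : f w * E = 0 := (hann E).mpr ⟨1, (mul_one E).symm⟩ _ ⟨w, hw, rfl⟩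
    rw [← mul_assoc, ← hgf w, ← map_mul, hwE, map_zero, zero_mul]

variable {M : Type*} [Monoid M]

theorem monoidAlgebra (hR : IsBaerRing R) (hArm : IsArmendariz R M) : IsBaerRing R[M] := by
  intro W
  obtain ⟨e, he, hann⟩ := hR {r | ∃ w ∈ W, ∃ g, w.coeff g = r}
  refine ⟨single 1 e, he.map singleOneRingHom, fun x => ⟨fun hx => ⟨x, ?_⟩, ?_⟩⟩
  · ext m
    obtain ⟨r, hr⟩ := (hann (x.coeff m)).mp fun _ ⟨w, hw, g, hwg⟩ => hwg ▸ hArm w x (hx w hw) g m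
    rw [coeff_single_one_mul, hr, ← mul_assoc, he.eq]
  · rintro ⟨s, rfl⟩ w hw
    have hwe : w * single 1 e = 0 := by
      ext m
      rw [coeff_mul_single_one]
      exact (hann e).mpr ⟨e, he.eq.symm⟩ _ ⟨w, hw, m, rfl⟩
    rw [← mul_assoc, hwe, zero_mul]

-- `liftNCRingHom (RingHom.id R) 1` is the augmentation `∑ r_g g ↦ ∑ r_g`.
theorem of_monoidAlgebra (h : IsBaerRing R[M]) : IsBaerRing R :=
  h.of_retract singleOneRingHom (liftNCRingHom (RingHom.id R) 1 fun _ _ => .one_right _)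
    fun r => by simp [liftNCRingHom_single]

end IsBaerRing

/-- Let `M` be a strictly totally ordered monoid with `|M| ≥ 2` and `R` an `M`-central
Armendariz ring. Then `R` is a Baer ring iff `R[M]` is a Baer ring. -/
theorem stmt_13 (M R : Type*) [Monoid M] [Nontrivial M] [LinearOrder M] [Ring R]
    (hstrict₁ : ∀ g g' h : M, g < g' → g * h < g' * h)
    (hstrict₂ : ∀ g g' h : M, g < g' → h * g < h * g')
    (hCA : ∀ α β : MonoidAlgebra R M, α * β = 0 →
      ∀ g ∈ α.coeff.support, ∀ h ∈ β.coeff.support, α.coeff g * β.coeff h ∈ Set.center R) :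
    (∀ W : Set R, ∃ e : R, IsIdempotentElem e ∧
        ∀ x : R, (∀ w ∈ W, w * x = 0) ↔ ∃ r : R, x = e * r) ↔
      (∀ W : Set (MonoidAlgebra R M), ∃ e : MonoidAlgebra R M, IsIdempotentElem e ∧
        ∀ x : MonoidAlgebra R M, (∀ w ∈ W, w * x = 0) ↔
          ∃ s : MonoidAlgebra R M, x = e * s) := by
  have : MulLeftStrictMono M := ⟨fun h _ _ hlt => hstrict₂ _ _ h hlt⟩
  have : MulRightStrictMono M := ⟨fun h _ _ hlt => hstrict₁ _ _ h hlt⟩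
  refine ⟨fun hR => ?_, IsBaerRing.of_monoidAlgebra⟩
  have : IsReduced R := IsBaerRing.isReduced hR fun _ =>
    IsCentralArmendariz.mem_center_of_isIdempotentElem (M := M) hCA
  exact IsBaerRing.monoidAlgebra hR IsReduced.isArmendariz
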